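/- Let β⁺,β⁻ ∈ [0,1), and suppose sequences α_n⁺, α_n⁻, λ_n⁺, λ_n⁻ → ∞ satisfy Γ(1−β⁺)α_n⁺/(λ_n⁺)^{1−β⁺} − Γ(1−β⁻)α_n⁻/(λ_n⁻)^{1−β⁻} → μ, Γ(2−β⁺)α_n⁺/(λ_n⁺)^{2−β⁺} → (σ⁺)², and Γ(2−β⁻)α_n⁻/(λ_n⁻)^{2−β⁻} → (σ⁻)² with (σ⁺)²,(σ⁻)² > 0. Then the characteristic functions of TS(α_n⁺,β⁺,λ_n⁺;α_n⁻,β⁻,λ_n⁻) converge pointwise to u ↦ e^{iuμ − u²σ²/2} where σ² = (σ⁺)² + (σ⁻)²; i.e., the distributions converge weakly to N(μ,σ²). -/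

import Mathlib

/-- Characteristic function of a one-sided tempered stable distribution `TS(α,β,λ)`. -/
noncomputable def oneSidedTSCharFun (α β lam : ℝ) (z : ℝ) : ℂ :=
  if β = 0 then ((lam : ℂ) / ((lam : ℂ) - Complex.I * z)) ^ (α : ℂ)
  else Complex.exp ((α : ℂ) * Complex.Gamma (-(β : ℂ)) *
    (((lam : ℂ) - Complex.I * z) ^ (β : ℂ) - (lam : ℂ) ^ (β : ℂ)))

/-- Characteristic function of `TS(α⁺,β⁺,λ⁺;α⁻,β⁻,λ⁻)`. -/
noncomputable def tsCharFun (ap bp lp am bm lm : ℝ) (z : ℝ) : ℂ :=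
  oneSidedTSCharFun ap bp lp z * oneSidedTSCharFun am bm lm (-z)

/-!
Each one-sided factor is `exp (i z κ₁ + κ₂ λ² R_β (i z / λ))`, with `κ_j` the cumulants and `R_β`
the second-order Taylor remainder of `-log (1 - w)` (for `β = 0`) or of `(1 - w) ^ β`, so that
`R_β w / w² → 1 / 2` as `w → 0`. As `λ_n → ∞`, `w_n = i z / λ_n → 0`, hence
`κ₂ λ² R_β (w_n) = (i z)² κ₂ · R_β (w_n) / w_n² → -z² σ² / 2`, while the first cumulants of the two
sides combine into `i u μ`. The limit of `R_β w / w²` is a mean value estimate on `R_β - w² / 2`,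
which replaces summing the cumulant series.
-/

open Filter Topology Metric Asymptotics Complex

theorem tendsto_div_sq_of_hasDerivAt {𝕜 : Type*} [RCLike 𝕜] {f f' : 𝕜 → 𝕜} {c : 𝕜} {r : ℝ}
    (hr : 0 < r) (hf : ∀ w ∈ ball 0 r, HasDerivAt f (f' w) w) (hf0 : f 0 = 0) (hf'0 : f' 0 = 0)
    (hf'' : HasDerivAt f' c 0) :
    Tendsto (fun w => f w / w ^ 2) (𝓝[≠] 0) (𝓝 (c / 2)) := by
  set g : 𝕜 → 𝕜 := fun w => f w - c / 2 * w ^ 2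
  have hg : ∀ w ∈ ball (0 : 𝕜) r, HasDerivWithinAt g (f' w - c * w) (ball 0 r) w := by
    intro w hw
    have := ((hf w hw).sub ((hasDerivAt_pow 2 w).const_mul (c / 2))).hasDerivWithinAt
      (s := ball 0 r)
    exact this.congr_deriv (by simp only [Nat.cast_ofNat, Nat.add_one_sub_one, pow_one]; ring)
  have hg' : (fun w => f' w - c * w) =o[𝓝 0] fun w => w := by
    simpa [hf'0, mul_comm] using hf''.isLittleO
  have hball : 𝓝[ball (0 : 𝕜) r] 0 = 𝓝 0 := nhdsWithin_eq_nhds.2 (ball_mem_nhds 0 hr)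
  have hg2 : g =o[𝓝 0] fun w => w ^ 2 := by
    have := (convex_ball (0 : 𝕜) r).isLittleO_pow_succ (mem_ball_self hr)
      (fun w hw => (hg w hw).hasFDerivWithinAt) (n := 1) (by
        rw [hball, ← isLittleO_norm_left]
        simp only [ContinuousLinearMap.norm_toSpanSingleton, sub_zero, pow_one]
        exact isLittleO_norm_left.2 (isLittleO_norm_right.2 hg'))
    simpa [hball, hf0, g, ← norm_pow, isLittleO_norm_right] using this
  have := (hg2.tendsto_div_nhds_zero.mono_left (nhdsWithin_le_nhds (s := {0}ᶜ))).add_const (c / 2)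
  rw [zero_add] at this
  refine this.congr' (eventually_nhdsWithin_of_forall fun w (hw : w ≠ 0) => ?_)
  field_simp
  ring

namespace Complex

theorem one_sub_mem_slitPlane_of_norm_lt_one {w : ℂ} (hw : ‖w‖ < 1) : 1 - w ∈ slitPlane := by
  simpa [sub_eq_add_neg] using mem_slitPlane_of_norm_lt_one (z := -w) (by simpa using hw)

theorem tendsto_neg_log_one_sub_sub_div_sq :
    Tendsto (fun w => (-log (1 - w) - w) / w ^ 2) (𝓝[≠] 0) (𝓝 (1 / 2)) := by
  refine tendsto_div_sq_of_hasDerivAt one_pos (f' := fun w => (1 - w)⁻¹ - 1) (fun w hw => ?_)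
    (by simp) (by simp) ?_
  · have hw' := one_sub_mem_slitPlane_of_norm_lt_one (mem_ball_zero_iff.1 hw)
    refine ((((hasDerivAt_id w).const_sub 1).clog hw').neg.sub (hasDerivAt_id w)).congr_deriv ?_
    simp only [id_eq]
    ring
  · refine ((((hasDerivAt_id (0 : ℂ)).const_sub 1).inv (by simp)).sub_const 1).congr_deriv ?_
    simp

theorem tendsto_one_sub_cpow_sub_div_sq (β : ℂ) :
    Tendsto (fun w => ((1 - w) ^ β - 1 + β * w) / w ^ 2) (𝓝[≠] 0) (𝓝 (β * (β - 1) / 2)) := by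
  refine tendsto_div_sq_of_hasDerivAt one_pos (f' := fun w => β - β * (1 - w) ^ (β - 1))
    (fun w hw => ?_) (by simp) (by simp) ?_
  · have hw' := one_sub_mem_slitPlane_of_norm_lt_one (mem_ball_zero_iff.1 hw)
    refine ((((hasDerivAt_id w).const_sub 1).cpow_const hw').sub_const 1).add
      ((hasDerivAt_id w).const_mul β) |>.congr_deriv ?_
    simp only [id_eq]
    ring
  · refine ((((hasDerivAt_id (0 : ℂ)).const_sub 1).cpow_const (c := β - 1) (by simp)).const_mul
      β).const_sub β |>.congr_deriv ?_
    simp only [id_eq, sub_zero, one_cpow]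
    ring

theorem ofReal_mul_cpow {r : ℝ} (hr : 0 < r) {x : ℂ} (hx : x ≠ 0) (y : ℂ) :
    (r * x) ^ y = (r : ℂ) ^ y * x ^ y := by
  have hr' : (r : ℂ) ≠ 0 := ofReal_ne_zero.2 hr.ne'
  rw [cpow_def_of_ne_zero (mul_ne_zero hr' hx), cpow_def_of_ne_zero hr', cpow_def_of_ne_zero hx,
    log_ofReal_mul hr hx, ← exp_add, ofReal_log hr.le, add_mul]

end Complex

/-- The cumulant `κ_j` of `TS(α, β, λ)`. -/
noncomputable def oneSidedTSCumulant (α β lam : ℝ) (j : ℕ) : ℝ :=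
  Real.Gamma (j - β) * α / lam ^ (j - β)

theorem oneSidedTSCumulant_mul_pow {lam : ℝ} (hl : 0 < lam) (α β : ℝ) (j : ℕ) :
    oneSidedTSCumulant α β lam j * lam ^ j = Real.Gamma (j - β) * α * lam ^ β := by
  rw [oneSidedTSCumulant, Real.rpow_sub hl, Real.rpow_natCast]
  field_simp

/-- Second-order Taylor remainder, normalised so that `R β w = w² / 2 + O(w³)`. -/
noncomputable def oneSidedTSRemainder (β : ℝ) (w : ℂ) : ℂ :=
  if β = 0 then -log (1 - w) - w else ((1 - w) ^ (β : ℂ) - 1 + β * w) / (β * (β - 1))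

theorem oneSidedTSRemainder_zero (β : ℝ) : oneSidedTSRemainder β 0 = 0 := by
  simp [oneSidedTSRemainder]

theorem tendsto_oneSidedTSRemainder_div_sq {β : ℝ} (hβ : β ≠ 1) :
    Tendsto (fun w => oneSidedTSRemainder β w / w ^ 2) (𝓝[≠] 0) (𝓝 (1 / 2)) := by
  by_cases hβ0 : β = 0
  · simpa [oneSidedTSRemainder, hβ0] using tendsto_neg_log_one_sub_sub_div_sq
  have hββ : (β : ℂ) * (β - 1) ≠ 0 :=
    mul_ne_zero (ofReal_ne_zero.2 hβ0) (sub_ne_zero.2 (by exact_mod_cast hβ))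
  have := (tendsto_one_sub_cpow_sub_div_sq β).div_const ((β : ℂ) * (β - 1))
  rw [div_right_comm, div_self hββ] at this
  refine this.congr fun w => ?_
  simp only [oneSidedTSRemainder, if_neg hβ0]
  ring

theorem Real.Gamma_one_sub {β : ℝ} (hβ0 : β ≠ 0) : Real.Gamma (1 - β) = -β * Real.Gamma (-β) := by
  rw [show 1 - β = -β + 1 by ring, Real.Gamma_add_one (neg_ne_zero.2 hβ0)]

theorem Real.Gamma_two_sub {β : ℝ} (hβ0 : β ≠ 0) (hβ1 : β ≠ 1) :
    Real.Gamma (2 - β) = β * (β - 1) * Real.Gamma (-β) := by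
  rw [show 2 - β = (1 - β) + 1 by ring, Real.Gamma_add_one (sub_ne_zero.2 hβ1.symm),
    Real.Gamma_one_sub hβ0]
  ring

theorem oneSidedTSCharFun_eq_exp {β lam : ℝ} (hβ : β ≠ 1) (hl : 0 < lam) (α z : ℝ) :
    oneSidedTSCharFun α β lam z = exp (I * z * oneSidedTSCumulant α β lam 1 +
      ((oneSidedTSCumulant α β lam 2 * lam ^ 2 : ℝ) : ℂ) *
        oneSidedTSRemainder β (I * z / lam)) := by
  have hl' : (lam : ℂ) ≠ 0 := ofReal_ne_zero.2 hl.ne'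
  set w : ℂ := I * z / lam
  have hzw : I * z = lam * w := by
    simp only [w]
    field_simp
  have hre : (1 - w).re = 1 := by simp [w]
  have h1w : 1 - w ≠ 0 := fun h => by simp [h] at hre
  have hsplit : (lam : ℂ) - I * z = lam * (1 - w) := by
    rw [hzw]
    ring
  have hκ1 := oneSidedTSCumulant_mul_pow hl α β 1
  have hκ2 := oneSidedTSCumulant_mul_pow hl α β 2
  push_cast at hκ1 hκ2
  rw [pow_one, ← eq_div_iff hl.ne'] at hκ1
  unfold oneSidedTSCharFun oneSidedTSRemainder
  split_ifs with hβ0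
  · subst hβ0
    simp only [sub_zero, Real.Gamma_one, Real.Gamma_two, Real.rpow_zero, one_mul, mul_one]
      at hκ1 hκ2
    have hinv : (lam : ℂ) / (lam - I * z) = (1 - w)⁻¹ := by
      rw [hsplit]
      field_simp
    rw [hinv, cpow_def_of_ne_zero (inv_ne_zero h1w), log_inv _ (by
      rw [Ne, arg_eq_pi_iff]; rintro ⟨h, -⟩; linarith), hκ1, hκ2]
    congr 1
    push_cast
    rw [hzw]
    field_simp
    ring
  · rw [hκ1, hκ2, Real.Gamma_one_sub hβ0, Real.Gamma_two_sub hβ0 hβ, hsplit, ofReal_mul_cpow hl h1w, ← ofReal_cpow hl.le,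
      show -(β : ℂ) = ((-β : ℝ) : ℂ) by push_cast; ring, Gamma_ofReal]
    congr 1
    have hβc : (β : ℂ) ≠ 0 := ofReal_ne_zero.2 hβ0
    have hβc1 : (β : ℂ) - 1 ≠ 0 := sub_ne_zero.2 (by exact_mod_cast hβ)
    push_cast
    rw [hzw]
    field_simp
    ring

theorem tendsto_oneSidedTSCumulant_two_mul_sq_mul_remainder {β : ℝ} (hβ : β ≠ 1)
    {α lam : ℕ → ℝ} (hlam : ∀ n, 0 < lam n) (hl : Tendsto lam atTop atTop) {s : ℝ}
    (hv : Tendsto (fun n => oneSidedTSCumulant (α n) β (lam n) 2) atTop (𝓝 s)) (z : ℝ) :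
    Tendsto (fun n => ((oneSidedTSCumulant (α n) β (lam n) 2 * lam n ^ 2 : ℝ) : ℂ) *
      oneSidedTSRemainder β (I * z / lam n)) atTop (𝓝 ((I * z) ^ 2 * s / 2)) := by
  rcases eq_or_ne z 0 with rfl | hz
  · simp [oneSidedTSRemainder_zero]
  have hz' : (z : ℂ) ≠ 0 := ofReal_ne_zero.2 hz
  have hIz : I * z ≠ 0 := mul_ne_zero I_ne_zero hz'
  have hw : Tendsto (fun n => I * z / lam n) atTop (𝓝[≠] 0) := by
    refine tendsto_nhdsWithin_iff.2 ⟨?_, Eventually.of_forall fun n => ?_⟩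
    · simpa [div_eq_mul_inv] using
        ((continuous_ofReal.tendsto 0).comp (tendsto_inv_atTop_zero.comp hl)).const_mul (I * z)
    · exact div_ne_zero hIz (ofReal_ne_zero.2 (hlam n).ne')
  have := (((continuous_ofReal.tendsto s).comp hv).mul
    ((tendsto_oneSidedTSRemainder_div_sq hβ).comp hw)).const_mul ((I * z) ^ 2)
  convert this using 2 with n
  · have hl' : (lam n : ℂ) ≠ 0 := ofReal_ne_zero.2 (hlam n).ne'
    simp only [Function.comp_apply]
    push_cast
    field_simp
  · ring

theorem temperedStable_tendsto_gaussian_general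
    (bp bm : ℝ) (hbp : bp ∈ Set.Ico (0:ℝ) 1) (hbm : bm ∈ Set.Ico (0:ℝ) 1)
    (ap am lp lm : ℕ → ℝ)
    (hpos : ∀ n, 0 < ap n ∧ 0 < am n ∧ 0 < lp n ∧ 0 < lm n)
    (hlp : Filter.Tendsto lp Filter.atTop Filter.atTop)
    (hlm : Filter.Tendsto lm Filter.atTop Filter.atTop)
    (μ sp2 sm2 : ℝ)
    (hmean : Filter.Tendsto
      (fun n => Real.Gamma (1 - bp) * ap n / lp n ^ (1 - bp) -
        Real.Gamma (1 - bm) * am n / lm n ^ (1 - bm)) Filter.atTop (nhds μ))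
    (hvp : Filter.Tendsto (fun n => Real.Gamma (2 - bp) * ap n / lp n ^ (2 - bp))
      Filter.atTop (nhds sp2))
    (hvm : Filter.Tendsto (fun n => Real.Gamma (2 - bm) * am n / lm n ^ (2 - bm))
      Filter.atTop (nhds sm2)) :
    ∀ u : ℝ, Filter.Tendsto (fun n => tsCharFun (ap n) bp (lp n) (am n) bm (lm n) u)
      Filter.atTop
      (nhds (Complex.exp (Complex.I * u * (μ : ℂ) -
        (u : ℂ) ^ 2 * ((sp2 + sm2 : ℝ) : ℂ) / 2))) := by
  intro u
  have hbp1 : bp ≠ 1 := hbp.2.ne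
  have hbm1 : bm ≠ 1 := hbm.2.ne
  have hlp0 (n : ℕ) : 0 < lp n := (hpos n).2.2.1
  have hlm0 (n : ℕ) : 0 < lm n := (hpos n).2.2.2
  have hplus := tendsto_oneSidedTSCumulant_two_mul_sq_mul_remainder hbp1 hlp0 hlp
    (by simpa [oneSidedTSCumulant] using hvp) u
  have hminus := tendsto_oneSidedTSCumulant_two_mul_sq_mul_remainder hbm1 hlm0 hlm
    (by simpa [oneSidedTSCumulant] using hvm) (-u)
  have hdrift := ((continuous_ofReal.tendsto μ).comp hmean).const_mul (I * u)
  have := ((hdrift.add hplus).add hminus).cexp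
  convert this using 2 with n
  · rw [tsCharFun, oneSidedTSCharFun_eq_exp hbp1 (hlp0 n), oneSidedTSCharFun_eq_exp hbm1 (hlm0 n),
      ← exp_add]
    congr 1
    simp only [oneSidedTSCumulant, Function.comp_apply]
    push_cast
    ring
  · congr 1
    push_cast
    linear_combination (-(u : ℂ) ^ 2 * (sp2 + sm2) / 2) * I_sq

/-- If `α_n⁺, α_n⁻, λ_n⁺, λ_n⁻ → ∞` with
`Γ(1−β⁺)α_n⁺/(λ_n⁺)^{1−β⁺} − Γ(1−β⁻)α_n⁻/(λ_n⁻)^{1−β⁻} → μ`,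
`Γ(2−β⁺)α_n⁺/(λ_n⁺)^{2−β⁺} → (σ⁺)² > 0` and `Γ(2−β⁻)α_n⁻/(λ_n⁻)^{2−β⁻} → (σ⁻)² > 0`,
then the characteristic functions of `TS(α_n⁺,β⁺,λ_n⁺;α_n⁻,β⁻,λ_n⁻)` converge
pointwise to `u ↦ e^{iuμ − u²σ²/2}` with `σ² = (σ⁺)² + (σ⁻)²`, i.e. the laws converge
weakly to `N(μ,σ²)`. -/
theorem temperedStable_tendsto_gaussian
    (bp bm : ℝ) (hbp : bp ∈ Set.Ico (0:ℝ) 1) (hbm : bm ∈ Set.Ico (0:ℝ) 1)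
    (ap am lp lm : ℕ → ℝ)
    (hpos : ∀ n, 0 < ap n ∧ 0 < am n ∧ 0 < lp n ∧ 0 < lm n)
    (hap : Filter.Tendsto ap Filter.atTop Filter.atTop)
    (ham : Filter.Tendsto am Filter.atTop Filter.atTop)
    (hlp : Filter.Tendsto lp Filter.atTop Filter.atTop)
    (hlm : Filter.Tendsto lm Filter.atTop Filter.atTop)
    (μ sp2 sm2 : ℝ) (hsp : 0 < sp2) (hsm : 0 < sm2)
    (hmean : Filter.Tendsto
      (fun n => Real.Gamma (1 - bp) * ap n / lp n ^ (1 - bp) -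
        Real.Gamma (1 - bm) * am n / lm n ^ (1 - bm)) Filter.atTop (nhds μ))
    (hvp : Filter.Tendsto (fun n => Real.Gamma (2 - bp) * ap n / lp n ^ (2 - bp))
      Filter.atTop (nhds sp2))
    (hvm : Filter.Tendsto (fun n => Real.Gamma (2 - bm) * am n / lm n ^ (2 - bm))
      Filter.atTop (nhds sm2)) :
    ∀ u : ℝ, Filter.Tendsto (fun n => tsCharFun (ap n) bp (lp n) (am n) bm (lm n) u)
      Filter.atTop
      (nhds (Complex.exp (Complex.I * u * (μ : ℂ) -
        (u : ℂ) ^ 2 * ((sp2 + sm2 : ℝ) : ℂ) / 2))) :=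
  temperedStable_tendsto_gaussian_general bp bm hbp hbm ap am lp lm hpos hlp hlm μ sp2 sm2 hmean hvp
    hvm
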